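/- Let K be a field equipped with a ring involution x ↦ x̄, and let O be a subring of K stable under the involution. Let 1 ≤ m ≤ n, and let a₁,…,aₘ,d ∈ Kˣ satisfy aⱼ·aⱼ₊₁⁻¹ ∈ O for 1 ≤ j ≤ m−1, aₘ·āₘ ∈ O, aₘ·d⁻¹ ∈ O, and d·d̄ ∈ O. Set T = diag(a₁,…,aₘ,ā₁⁻¹,…,āₘ⁻¹) ∈ GL₂ₘ(K) and A = diag(a₁,…,aₘ,d,…,d) ∈ GLₙ(K). Then for every Z₃ ∈ M_{m,m}(O) and Z₄ ∈ M_{m,n−m}(O), the matrix T⁻¹·[[1ₘ,0],[Z₃,Z₄]]·A has the block form [[1ₘ,0],[W₃,W₄]] with W₃ ∈ M_{m,m}(O) and W₄ ∈ M_{m,n−m}(O); explicitly W₃ has (i,j)-entry āᵢ·(Z₃)ᵢⱼ·aⱼ and W₄ has (i,j)-entry āᵢ·(Z₄)ᵢⱼ·d. -/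

import Mathlib

open Matrix

/-- Every entry of the matrix lies in the subring `O`. -/
def MemO {K : Type*} [Field K] {α β : Type*} (O : Subring K) (M : Matrix α β K) : Prop :=
  ∀ i j, M i j ∈ O

section aux

variable {K : Type*} [Field K] (O : Subring K)

lemma chain_aux {m : ℕ} (a : Fin m → Kˣ)
    (hstep : ∀ i j : Fin m, (i : ℕ) + 1 = (j : ℕ) → (a i : K) * ((a j : K))⁻¹ ∈ O) :
    ∀ k i (h : i + k < m), (a ⟨i, by omega⟩ : K) * ((a ⟨i + k, h⟩ : K))⁻¹ ∈ O := by
  intro k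
  induction k with
  | zero =>
    intro i h
    rw [show ((⟨i + 0, h⟩ : Fin m)) = ⟨i, by omega⟩ from rfl,
      mul_inv_cancel₀ (Units.ne_zero _)]
    exact one_mem O
  | succ k ih =>
    intro i h
    have h1 : i + k < m := by omega
    have h2 := ih i h1
    have h3 := hstep ⟨i + k, h1⟩ ⟨i + k + 1, by omega⟩ rfl
    have hne : (a ⟨i + k, h1⟩ : K) ≠ 0 := Units.ne_zero _
    have key : (a ⟨i, by omega⟩ : K) * ((a ⟨i + (k + 1), h⟩ : K))⁻¹
        = ((a ⟨i, by omega⟩ : K) * ((a ⟨i + k, h1⟩ : K))⁻¹) *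
          ((a ⟨i + k, h1⟩ : K) * ((a ⟨i + k + 1, by omega⟩ : K))⁻¹) := by
      field_simp
      rfl
    rw [key]
    exact mul_mem h2 h3

lemma chain {m : ℕ} (a : Fin m → Kˣ)
    (hstep : ∀ i j : Fin m, (i : ℕ) + 1 = (j : ℕ) → (a i : K) * ((a j : K))⁻¹ ∈ O)
    (i j : Fin m) (hij : (i : ℕ) ≤ (j : ℕ)) : (a i : K) * ((a j : K))⁻¹ ∈ O := by
  obtain ⟨iv, hiv⟩ := i
  obtain ⟨jv, hjv⟩ := j
  have hij' : iv ≤ jv := hij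
  have e : (⟨jv, hjv⟩ : Fin m) = ⟨iv + (jv - iv), by omega⟩ := by
    apply Fin.ext; simp; omega
  rw [e]
  exact chain_aux O a hstep _ _ _

end aux

lemma block_identity {K : Type*} [Field K] [StarRing K]
    (m n : ℕ)
    (a : Fin m → Kˣ) (d : Kˣ)
    (Z₃ : Matrix (Fin m) (Fin m) K) (Z₄ : Matrix (Fin m) (Fin (n - m)) K) :
    ((Matrix.fromBlocks (Matrix.diagonal fun i => (a i : K)) 0 0
        (Matrix.diagonal fun i => (star (a i : K))⁻¹))⁻¹ : Matrix (Fin m ⊕ Fin m) (Fin m ⊕ Fin m) K) *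
      (Matrix.fromBlocks 1 0 Z₃ Z₄ : Matrix (Fin m ⊕ Fin m) (Fin m ⊕ Fin (n - m)) K) *
      Matrix.diagonal (Sum.elim (fun i => (a i : K)) (fun _ => (d : K))) =
      Matrix.fromBlocks 1 0
        (Matrix.of fun i j => star (a i : K) * Z₃ i j * (a j : K))
        (Matrix.of fun i j => star (a i : K) * Z₄ i j * (d : K)) := by
  have hAinv : (Matrix.fromBlocks (Matrix.diagonal fun i => (a i : K)) 0 0
        (Matrix.diagonal fun i => (star (a i : K))⁻¹))⁻¹
      = Matrix.fromBlocks (Matrix.diagonal fun i => ((a i : K))⁻¹) 0 0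
        (Matrix.diagonal fun i => star (a i : K)) := by
    apply Matrix.inv_eq_left_inv
    rw [Matrix.fromBlocks_multiply]
    simp [Matrix.diagonal_mul_diagonal, inv_mul_cancel₀, mul_inv_cancel₀,
      Units.ne_zero, star_ne_zero, ← Matrix.fromBlocks_one]
  rw [hAinv, ← Matrix.fromBlocks_diagonal, Matrix.fromBlocks_multiply]
  erw [Matrix.fromBlocks_multiply]
  ext i j
  rcases i with i | i <;> rcases j with j | j <;>
    simp [Matrix.fromBlocks, Matrix.diagonal_mul, Matrix.mul_diagonal,
      Matrix.mul_apply, Matrix.diagonal, Matrix.one_apply, mul_comm, mul_assoc,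
      inv_mul_cancel₀, Units.ne_zero, Finset.mul_sum]
  split_ifs with h
  · subst h; simp
  · rfl


/-- The unitary (Case U0) torus-compression inclusion
`t⁻¹·[1 0; M(O) M(O)] ⊆ [1 0; M(O) M(O)]·A(t̆)⁻¹` from the proof of Theorem 2.5. -/
theorem torus_compression_U0 {K : Type*} [Field K] [StarRing K] (O : Subring K)
    (hOstar : ∀ x ∈ O, star x ∈ O)
    (m n : ℕ) (hm : 1 ≤ m) (hmn : m ≤ n)
    (a : Fin m → Kˣ) (d : Kˣ)
    (hstep : ∀ i j : Fin m, (i : ℕ) + 1 = (j : ℕ) → (a i : K) * ((a j : K))⁻¹ ∈ O)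
    (hlast : (a ⟨m - 1, by omega⟩ : K) * star (a ⟨m - 1, by omega⟩ : K) ∈ O)
    (had : (a ⟨m - 1, by omega⟩ : K) * ((d : K))⁻¹ ∈ O)
    (hd2 : (d : K) * star (d : K) ∈ O)
    (Z₃ : Matrix (Fin m) (Fin m) K) (Z₄ : Matrix (Fin m) (Fin (n - m)) K)
    (hZ₃ : MemO O Z₃) (hZ₄ : MemO O Z₄) :
    ((Matrix.fromBlocks (Matrix.diagonal fun i => (a i : K)) 0 0
        (Matrix.diagonal fun i => (star (a i : K))⁻¹))⁻¹ : Matrix (Fin m ⊕ Fin m) (Fin m ⊕ Fin m) K) *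
      (Matrix.fromBlocks 1 0 Z₃ Z₄ : Matrix (Fin m ⊕ Fin m) (Fin m ⊕ Fin (n - m)) K) *
      Matrix.diagonal (Sum.elim (fun i => (a i : K)) (fun _ => (d : K))) =
      Matrix.fromBlocks 1 0
        (Matrix.of fun i j => star (a i : K) * Z₃ i j * (a j : K))
        (Matrix.of fun i j => star (a i : K) * Z₄ i j * (d : K)) ∧
    MemO O (Matrix.of fun i j : Fin m => star (a i : K) * Z₃ i j * (a j : K)) ∧
    MemO O (Matrix.of fun (i : Fin m) (j : Fin (n - m)) =>
      star (a i : K) * Z₄ i j * (d : K)) := by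
  set L : Fin m := ⟨m - 1, by omega⟩ with hL
  have hchain : ∀ i : Fin m, (a i : K) * ((a L : K))⁻¹ ∈ O := fun i =>
    chain O a hstep i L (by simp [hL]; omega)
  have haL : (a L : K) ≠ 0 := Units.ne_zero _
  have hsaL : star (a L : K) ≠ 0 := star_ne_zero.mpr haL
  have hdne : (d : K) ≠ 0 := Units.ne_zero _
  have hsd : star (d : K) ≠ 0 := star_ne_zero.mpr hdne
  have hstarmul : ∀ i j : Fin m, star (a i : K) * (a j : K) ∈ O := by
    intro i j
    have key : star (a i : K) * (a j : K)
        = star ((a i : K) * ((a L : K))⁻¹) * ((a L : K) * star (a L : K))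
          * ((a j : K) * ((a L : K))⁻¹) := by
      simp only [star_mul', star_inv₀]
      field_simp
    rw [key]
    exact mul_mem (mul_mem (hOstar _ (hchain i)) hlast) (hchain j)
  have hstard : ∀ i : Fin m, star (a i : K) * (d : K) ∈ O := by
    intro i
    have key : star (a i : K) * (d : K)
        = star ((a i : K) * ((a L : K))⁻¹) * star ((a L : K) * ((d : K))⁻¹)
          * ((d : K) * star (d : K)) := by
      simp only [star_mul', star_inv₀]
      field_simp
    rw [key]
    exact mul_mem (mul_mem (hOstar _ (hchain i)) (hOstar _ had)) hd2
  refine ⟨block_identity m n a d Z₃ Z₄, ?_, ?_⟩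
  · intro i j
    have : star (a i : K) * Z₃ i j * (a j : K)
        = (star (a i : K) * (a j : K)) * Z₃ i j := by ring
    simp only [Matrix.of_apply]
    rw [this]
    exact mul_mem (hstarmul i j) (hZ₃ i j)
  · intro i j
    have : star (a i : K) * Z₄ i j * (d : K)
        = (star (a i : K) * (d : K)) * Z₄ i j := by ring
    simp only [Matrix.of_apply]
    rw [this]
    exact mul_mem (hstard i) (hZ₄ i j)
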